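/- Let γ : ℝ³ → S₃(ℝ) be a smooth symmetric matrix field. Then sym(curl(curl(S γ))) = inc γ - S(def(div(S γ))) - S(Hess(tr γ)), where S(A) = Aᵀ - tr(A)I₃, inc is the row-wise curl composed with column-wise curl, def is the symmetric gradient, Hess is the Hessian, and all matrix differential operators act column-wise. -/

import Mathlib

noncomputable section

/-- Levi-Civita symbol in three dimensions. -/
def lc (i j k : Fin 3) : ℝ :=
  if (i, j, k) = (0, 1, 2) ∨ (i, j, k) = (1, 2, 0) ∨ (i, j, k) = (2, 0, 1) then 1
  else if (i, j, k) = (0, 2, 1) ∨ (i, j, k) = (2, 1, 0) ∨ (i, j, k) = (1, 0, 2) then -1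
  else 0

/-- Partial derivative `∂ᵢ f` of a scalar field on `ℝ³`. -/
def pd (i : Fin 3) (f : (Fin 3 → ℝ) → ℝ) (x : Fin 3 → ℝ) : ℝ :=
  fderiv ℝ f x (Pi.single i 1)

/-- Curl of a vector field: `(curl v)ᵢ = εᵢⱼₖ ∂ⱼ vₖ`. -/
def vcurl (v : (Fin 3 → ℝ) → Fin 3 → ℝ) (x : Fin 3 → ℝ) (i : Fin 3) : ℝ :=
  ∑ j, ∑ k, lc i j k * pd j (fun y => v y k) x

/-- Column-wise curl of a matrix field: `(curl M)ᵢⱼ = εᵢₖₗ ∂ₖ Mₗⱼ`. -/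
def mcurl (M : (Fin 3 → ℝ) → Matrix (Fin 3) (Fin 3) ℝ) (x : Fin 3 → ℝ) :
    Matrix (Fin 3) (Fin 3) ℝ :=
  Matrix.of fun i j => ∑ k, ∑ l, lc i k l * pd k (fun y => M y l j) x

/-- Column-wise divergence of a matrix field: `(div M)ᵢ = ∂ⱼ Mⱼᵢ`. -/
def mdiv (M : (Fin 3 → ℝ) → Matrix (Fin 3) (Fin 3) ℝ) (x : Fin 3 → ℝ) (i : Fin 3) : ℝ :=
  ∑ j, pd j (fun y => M y j i) x

/-- The algebraic operator `S(A) = Aᵀ - tr(A)·I₃`. -/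
def Sop (A : Matrix (Fin 3) (Fin 3) ℝ) : Matrix (Fin 3) (Fin 3) ℝ :=
  A.transpose - A.trace • (1 : Matrix (Fin 3) (Fin 3) ℝ)

/-- `(mskw V)ᵢⱼ = -εᵢⱼₖ Vₖ`. -/
def mskw (V : Fin 3 → ℝ) : Matrix (Fin 3) (Fin 3) ℝ :=
  Matrix.of fun i j => -∑ k, lc i j k * V k

/-- `(vskw M)ᵢ = -(1/2) εᵢⱼₖ Mⱼₖ`. -/
def vskw (M : Matrix (Fin 3) (Fin 3) ℝ) : Fin 3 → ℝ :=
  fun i => -(1 / 2 : ℝ) * ∑ j, ∑ k, lc i j k * M j k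

/-- Symmetric gradient . -/
def defv (v : (Fin 3 → ℝ) → Fin 3 → ℝ) (x : Fin 3 → ℝ) : Matrix (Fin 3) (Fin 3) ℝ :=
  Matrix.of fun i j => (1 / 2 : ℝ) * (pd i (fun y => v y j) x + pd j (fun y => v y i) x)

/-- The incompatibility operator: row-wise curl followed by column-wise curl. -/
def inc (γ : (Fin 3 → ℝ) → Matrix (Fin 3) (Fin 3) ℝ) (x : Fin 3 → ℝ) :
    Matrix (Fin 3) (Fin 3) ℝ :=
  mcurl (fun y => (mcurl (fun z => (γ z).transpose) y).transpose) x

/-- Hessian of a scalar field. -/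
def hess (u : (Fin 3 → ℝ) → ℝ) (x : Fin 3 → ℝ) : Matrix (Fin 3) (Fin 3) ℝ :=
  Matrix.of fun i j => pd i (fun y => pd j u y) x

/-! Every operator in the identity is a constant-coefficient second-order operator, so at a point
`x` both sides are linear expressions in the second partials `∂ₐ∂_b γ_pq(x)`. Once this is made
explicit, the identity becomes an algebraic one about an array `T a b p q` that is symmetric in
`(a, b)` (Schwarz) and in `(p, q)` (symmetry of `γ`), which is checked entrywise after the
Levi-Civita contractions are written as cross-product differences. -/

open Finset
open scoped Matrix

lemma sum_sum_lc_mul (i : Fin 3) (f : Fin 3 → Fin 3 → ℝ) :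
    ∑ k, ∑ l, lc i k l * f k l = f (i + 1) (i + 2) - f (i + 2) (i + 1) := by
  fin_cases i <;> simp [Fin.sum_univ_three, lc, sub_eq_add_neg, add_comm]

lemma Sop_apply (A : Matrix (Fin 3) (Fin 3) ℝ) (k l : Fin 3) :
    Sop A k l = A l k - (∑ p, A p p) * (1 : Matrix (Fin 3) (Fin 3) ℝ) k l :=
  rfl

section PartialDerivatives

variable {f g : (Fin 3 → ℝ) → ℝ} {x : Fin 3 → ℝ}

lemma pd_sub (i : Fin 3) (hf : DifferentiableAt ℝ f x) (hg : DifferentiableAt ℝ g x) :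
    pd i (fun y => f y - g y) x = pd i f x - pd i g x := by
  simp [pd, fderiv_fun_sub hf hg]

lemma pd_const_mul (i : Fin 3) (c : ℝ) (hf : DifferentiableAt ℝ f x) :
    pd i (fun y => c * f y) x = c * pd i f x := by
  simp [pd, fderiv_const_mul hf c]

lemma pd_mul_const (i : Fin 3) (c : ℝ) (hf : DifferentiableAt ℝ f x) :
    pd i (fun y => f y * c) x = pd i f x * c := by
  simpa only [mul_comm] using pd_const_mul i c hf

lemma pd_sum {ι : Type*} (i : Fin 3) (s : Finset ι) {F : ι → (Fin 3 → ℝ) → ℝ}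
    (hF : ∀ t ∈ s, DifferentiableAt ℝ (F t) x) :
    pd i (fun y => ∑ t ∈ s, F t y) x = ∑ t ∈ s, pd i (F t) x := by
  simp [pd, fderiv_fun_sum hF]

lemma ContDiff.pd {n : ℕ} (hf : ContDiff ℝ (n + 1) f) (i : Fin 3) : ContDiff ℝ n (pd i f) :=
  (hf.fderiv_right le_rfl).clm_apply contDiff_const

lemma pd_pd_comm (hf : ContDiff ℝ 2 f) (x : Fin 3 → ℝ) (a b : Fin 3) :
    pd a (pd b f) x = pd b (pd a f) x := by
  have hdf : Differentiable ℝ (fderiv ℝ f) :=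
    (hf.fderiv_right (m := 1) le_rfl).differentiable one_ne_zero
  have hsecond (c d : Fin 3) :
      pd c (pd d f) x = fderiv ℝ (fderiv ℝ f) x (Pi.single c 1) (Pi.single d 1) := by
    rw [pd, show pd d f = fun y => fderiv ℝ f y (Pi.single d 1) from rfl,
      fderiv_clm_apply (hdf x) (differentiableAt_const _)]
    simp
  rw [hsecond, hsecond, hf.contDiffAt.isSymmSndFDerivAt (by simp)]

end PartialDerivatives

def secondPartials (M : (Fin 3 → ℝ) → Matrix (Fin 3) (Fin 3) ℝ) (x : Fin 3 → ℝ) (a b : Fin 3) :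
    Matrix (Fin 3) (Fin 3) ℝ :=
  Matrix.of fun p q => pd a (pd b fun y => M y p q) x

/-- `T a b` stands for the matrix `∂ₐ∂_b M(x)` of a matrix field `M`: the `jet*` operators are
the second-order operators of the statement evaluated on such second partials. -/
def jetCurlCurl (T : Fin 3 → Fin 3 → Matrix (Fin 3) (Fin 3) ℝ) : Matrix (Fin 3) (Fin 3) ℝ :=
  Matrix.of fun i j => ∑ k, ∑ l, lc i k l * ∑ m, ∑ n, lc l m n * T k m n j

def jetInc (T : Fin 3 → Fin 3 → Matrix (Fin 3) (Fin 3) ℝ) : Matrix (Fin 3) (Fin 3) ℝ :=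
  Matrix.of fun i j => ∑ k, ∑ l, lc i k l * ∑ m, ∑ n, lc j m n * T k m l n

def jetDefDiv (T : Fin 3 → Fin 3 → Matrix (Fin 3) (Fin 3) ℝ) : Matrix (Fin 3) (Fin 3) ℝ :=
  Matrix.of fun i j => 1 / 2 * ∑ k, (T i k k j + T j k k i)

def jetHessTrace (T : Fin 3 → Fin 3 → Matrix (Fin 3) (Fin 3) ℝ) : Matrix (Fin 3) (Fin 3) ℝ :=
  Matrix.of fun i j => (T i j).trace

section SecondOrderOperators

variable {M : (Fin 3 → ℝ) → Matrix (Fin 3) (Fin 3) ℝ}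

lemma differentiable_pd_entry (hM : ∀ p q, ContDiff ℝ 2 fun y => M y p q) (a p q : Fin 3) :
    Differentiable ℝ (pd a fun y => M y p q) :=
  ((hM p q).pd a).differentiable one_ne_zero

lemma mcurl_apply (x : Fin 3 → ℝ) (i j : Fin 3) :
    mcurl M x i j = ∑ k, ∑ l, lc i k l * pd k (fun y => M y l j) x :=
  rfl

lemma pd_mcurl_apply (hM : ∀ p q, ContDiff ℝ 2 fun y => M y p q) (x : Fin 3 → ℝ) (a i j : Fin 3) :
    pd a (fun y => mcurl M y i j) x = ∑ k, ∑ l, lc i k l * pd a (pd k fun y => M y l j) x := by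
  have hpd := differentiable_pd_entry hM
  simp only [mcurl_apply]
  rw [pd_sum _ _ fun k _ => by fun_prop]
  refine sum_congr rfl fun k _ => ?_
  rw [pd_sum _ _ fun l _ => by fun_prop]
  exact sum_congr rfl fun l _ => pd_const_mul _ _ (hpd k l j x)

lemma mcurl_mcurl_eq (hM : ∀ p q, ContDiff ℝ 2 fun y => M y p q) (x : Fin 3 → ℝ) :
    mcurl (fun y => mcurl M y) x = jetCurlCurl (secondPartials M x) := by
  ext i j
  rw [mcurl_apply]
  simp only [pd_mcurl_apply hM, jetCurlCurl, secondPartials, Matrix.of_apply]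

lemma inc_eq (hM : ∀ p q, ContDiff ℝ 2 fun y => M y p q) (x : Fin 3 → ℝ) :
    inc M x = jetInc (secondPartials M x) := by
  ext i j
  rw [inc, mcurl_apply]
  simp only [Matrix.transpose_apply, pd_mcurl_apply (M := fun y => (M y)ᵀ) (fun p q => hM q p),
    jetInc, secondPartials, Matrix.of_apply]

lemma defv_mdiv_eq (hM : ∀ p q, ContDiff ℝ 2 fun y => M y p q) (x : Fin 3 → ℝ) :
    defv (fun y => mdiv M y) x = jetDefDiv (secondPartials M x) := by
  have hpd := differentiable_pd_entry hM
  ext i j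
  simp only [defv, mdiv, jetDefDiv, secondPartials, Matrix.of_apply]
  rw [pd_sum _ _ fun k _ => hpd k k j x, pd_sum _ _ fun k _ => hpd k k i x, sum_add_distrib]

lemma hess_trace_eq (hM : ∀ p q, ContDiff ℝ 2 fun y => M y p q) (x : Fin 3 → ℝ) :
    hess (fun y => (M y).trace) x = jetHessTrace (secondPartials M x) := by
  have hpd := differentiable_pd_entry hM
  have hdiff (p q : Fin 3) : Differentiable ℝ fun y => M y p q := (hM p q).differentiable two_ne_zero
  ext i j
  simp only [hess, jetHessTrace, secondPartials, Matrix.trace, Matrix.diag, Matrix.of_apply]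
  have htrace : pd j (fun y => ∑ p, M y p p) = fun y => ∑ p, pd j (fun z => M z p p) y :=
    funext fun y => pd_sum _ _ fun p _ => hdiff p p y
  rw [htrace, pd_sum _ _ fun p _ => hpd j p p x]

lemma pd_Sop_apply {x : Fin 3 → ℝ} (hM : ∀ p q, DifferentiableAt ℝ (fun y => M y p q) x)
    (a k l : Fin 3) :
    pd a (fun y => Sop (M y) k l) x = Sop (Matrix.of fun p q => pd a (fun y => M y p q) x) k l := by
  simp only [Sop_apply, Matrix.of_apply]
  rw [pd_sub _ (hM l k) (by fun_prop), pd_mul_const _ _ (by fun_prop),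
    pd_sum _ _ fun p _ => hM p p]

lemma secondPartials_Sop (hM : ∀ p q, ContDiff ℝ 2 fun y => M y p q) (x : Fin 3 → ℝ) :
    secondPartials (fun y => Sop (M y)) x = fun a b => Sop (secondPartials M x a b) := by
  have hpd := differentiable_pd_entry hM
  have hdiff (p q : Fin 3) : Differentiable ℝ fun y => M y p q := (hM p q).differentiable two_ne_zero
  ext a b k l
  have hSop : pd b (fun y => Sop (M y) k l) =
      fun y => Sop (Matrix.of fun p q => pd b (fun z => M z p q) y) k l :=
    funext fun y => pd_Sop_apply (fun p q => hdiff p q y) b k l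
  simp only [secondPartials, Matrix.of_apply]
  rw [hSop, pd_Sop_apply (M := fun y => Matrix.of fun p q => pd b (fun z => M z p q) y)
    (fun p q => hpd b p q x)]
  rfl

lemma secondPartials_comm (hM : ∀ p q, ContDiff ℝ 2 fun y => M y p q) (x : Fin 3 → ℝ)
    (a b : Fin 3) : secondPartials M x a b = secondPartials M x b a := by
  ext p q
  exact pd_pd_comm (hM p q) x a b

lemma secondPartials_transpose (hsym : ∀ y, (M y)ᵀ = M y) (x : Fin 3 → ℝ) (a b : Fin 3) :
    (secondPartials M x a b)ᵀ = secondPartials M x a b := by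
  ext p q
  simp only [secondPartials, Matrix.transpose_apply, Matrix.of_apply]
  congr! 3 with y
  rw [← Matrix.transpose_apply (M y) p q, hsym]

end SecondOrderOperators

lemma sym_jetCurlCurl_Sop (T : Fin 3 → Fin 3 → Matrix (Fin 3) (Fin 3) ℝ)
    (hT : ∀ a b, T a b = T b a) (hTt : ∀ a b, (T a b)ᵀ = T a b) (i j : Fin 3) :
    1 / 2 * (jetCurlCurl (fun a b => Sop (T a b)) i j + jetCurlCurl (fun a b => Sop (T a b)) j i) =
      jetInc T i j - Sop (jetDefDiv fun a b => Sop (T a b)) i j - Sop (jetHessTrace T) i j := by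
  have hTe (p q : Fin 3) : ∀ a b, T a b q p = T a b p q := fun a b => by
    rw [← Matrix.transpose_apply (T a b) p q, hTt]
  fin_cases i <;> fin_cases j <;>
  · simp only [jetCurlCurl, jetInc, Matrix.of_apply, sum_sum_lc_mul]
    simp only [jetDefDiv, jetHessTrace, Sop_apply, Matrix.of_apply, Matrix.trace, Matrix.diag_apply,
      Fin.sum_univ_three, Matrix.one_apply, Fin.isValue, Fin.zero_eta, Fin.mk_one, Fin.reduceFinMk,
      Fin.reduceAdd, Fin.reduceEq, ↓reduceIte]
    simp only [hT 1 0, hT 2 0, hT 2 1, hTe 0 1, hTe 0 2, hTe 1 2]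
    ring

theorem stmt_12 (γ : (Fin 3 → ℝ) → Matrix (Fin 3) (Fin 3) ℝ)
    (hγ : ∀ i j, ContDiff ℝ 3 fun x => γ x i j)
    (hsym : ∀ x, (γ x).transpose = γ x) :
    ∀ (x : Fin 3 → ℝ) (i j : Fin 3),
      (1 / 2 : ℝ) * (mcurl (fun y => mcurl (fun z => Sop (γ z)) y) x i j +
          mcurl (fun y => mcurl (fun z => Sop (γ z)) y) x j i) =
        inc γ x i j - Sop (defv (fun y => mdiv (fun z => Sop (γ z)) y) x) i j -
          Sop (hess (fun y => (γ y).trace) x) i j := by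
  intro x i j
  have hγ2 (p q : Fin 3) : ContDiff ℝ 2 fun y => γ y p q := (hγ p q).of_le (by norm_num)
  have hSγ2 (p q : Fin 3) : ContDiff ℝ 2 fun y => Sop (γ y) p q := by
    simp only [Sop_apply]
    fun_prop
  rw [mcurl_mcurl_eq hSγ2, inc_eq hγ2, defv_mdiv_eq hSγ2, hess_trace_eq hγ2,
    secondPartials_Sop hγ2]
  exact sym_jetCurlCurl_Sop _ (secondPartials_comm hγ2 x) (secondPartials_transpose hsym x) i j

end
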